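/- For every run of the modified greedy algorithm and every OPT ⊆ V with c(OPT) ≤ b, it holds that f(S_m) ≥ ᾱ* · f(OPT), where ᾱ* := sInf { α ∈ [0,1] | ∃ x1 x2 x3 ∈ [0,1] such that: α ≥ x1; α ≥ 1 − x1 − x2; (1 − x3)·α ≥ (1 − x3)·x1 + (1 − 2·x3)·x2; and x1 ≥ 1 − exp(−x3) }. -/

import Mathlib

/-!
Until the first element `w` of `OPT` is rejected, submodularity and the greedy rule give
`c (u k) * (f OPT - f (A k)) ≤ b * f (u k | A k)` at every accepted step, so the deficit
`f OPT - f (A k)` decays like `exp (-c (A k) / b)`. If half the budget is spent by then, the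
greedy set already has value `(1 - e^{-1/2}) f OPT`. Otherwise `c w > b / 2`, and the same argument
for `OPT \ {w}`, with residual budget `b - c w` and target `f OPT - f (w | A)`, where
`f (w | A) ≤ f {w}`, runs until a second element of `OPT` is rejected; by then more than `c w` has
been spent, and an elementary estimate of the two exponentials gives the bound. The ratio
`1 - e^{-1/2}` is admissible in the infimum, with `x₁ = 1 - e^{-1/2}`, `x₂ = 1`, `x₃ = 1/2`.
-/

open Finset Real

section Submodular

variable {V : Type*} [DecidableEq V]

def marginal (f : Finset V → ℝ) (v : V) (S : Finset V) : ℝ := f (insert v S) - f S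

variable {f : Finset V → ℝ}

lemma marginal_nonneg (hmono : ∀ S T : Finset V, S ⊆ T → f S ≤ f T) (v : V) (S : Finset V) :
    0 ≤ marginal f v S :=
  sub_nonneg.2 (hmono _ _ (subset_insert v S))

lemma marginal_le_of_subset (hsub : ∀ S T : Finset V, f (S ∪ T) + f (S ∩ T) ≤ f S + f T)
    {S T : Finset V} (hST : S ⊆ T) {v : V} (hv : v ∉ T) :
    marginal f v T ≤ marginal f v S := by
  have h := hsub (insert v S) T
  rw [insert_union, union_eq_right.2 hST, insert_inter_of_notMem hv,
    inter_eq_left.2 hST] at h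
  unfold marginal
  linarith

lemma marginal_le_apply_singleton (hf0 : f ∅ = 0)
    (hsub : ∀ S T : Finset V, f (S ∪ T) + f (S ∩ T) ≤ f S + f T)
    {S : Finset V} {v : V} (hv : v ∉ S) : marginal f v S ≤ f {v} := by
  simpa [marginal, hf0] using marginal_le_of_subset hsub (empty_subset S) hv

lemma apply_le_apply_singleton_add_apply_erase (hf0 : f ∅ = 0)
    (hsub : ∀ S T : Finset V, f (S ∪ T) + f (S ∩ T) ≤ f S + f T) {W : Finset V} {w : V}
    (hw : w ∈ W) : f W ≤ f {w} + f (W.erase w) := by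
  have h := marginal_le_apply_singleton hf0 hsub (notMem_erase w W)
  rw [marginal, insert_erase hw] at h
  linarith

lemma sub_le_sum_marginal (hsub : ∀ S T : Finset V, f (S ∪ T) + f (S ∩ T) ≤ f S + f T)
    (S W : Finset V) : f (S ∪ W) - f S ≤ ∑ v ∈ W \ S, marginal f v S := by
  induction W using Finset.induction_on with
  | empty => simp
  | @insert a W ha ih =>
    by_cases haS : a ∈ S
    · rwa [union_insert, insert_eq_of_mem (mem_union_left W haS), insert_sdiff_of_mem _ haS]
    · rw [union_insert, insert_sdiff_of_notMem _ haS, sum_insert (by simp [ha])]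
      have h := marginal_le_of_subset hsub (subset_union_left : S ⊆ S ∪ W) (v := a)
        (by simp [haS, ha])
      unfold marginal at h ih ⊢
      linarith

lemma le_add_marginal_of_mem (hsub : ∀ S T : Finset V, f (S ∪ T) + f (S ∩ T) ≤ f S + f T)
    {R S W : Finset V} {w : V} (hw : w ∈ W) (hRS : R ⊆ S) (hwS : w ∉ S) :
    f (S ∪ W) ≤ f (S ∪ W.erase w) + marginal f w R := by
  have h := marginal_le_of_subset hsub (hRS.trans subset_union_left : R ⊆ S ∪ W.erase w)
    (v := w) (by simp [hwS])
  rw [marginal, ← union_insert, insert_erase hw] at h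
  linarith

end Submodular

lemma le_mul_exp_neg_of_mul_le {d d' x M : ℝ} (hM : 0 < M) (hx : 0 ≤ x) (hd' : d' ≤ d)
    (h : x * d ≤ M * (d - d')) : d' ≤ d * exp (-(x / M)) := by
  rcases le_or_gt d 0 with hd | hd
  · have : exp (-(x / M)) ≤ 1 := exp_le_one_iff.2 (by simp only [neg_nonpos]; positivity)
    nlinarith
  · have h1 : d' ≤ d * (1 - x / M) := by
      rw [mul_one_sub, mul_div_assoc', le_sub_iff_add_le, ← le_sub_iff_add_le', div_le_iff₀ hM]
      linarith
    calc d' ≤ d * (1 - x / M) := h1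
      _ ≤ d * exp (-(x / M)) := by
        gcongr
        linarith [add_one_le_exp (-(x / M))]

lemma le_mul_exp_of_forall_le_mul_exp {d y : ℕ → ℝ} {M : ℝ} {a e : ℕ} (hae : a ≤ e)
    (h : ∀ k, a ≤ k → k < e → d (k + 1) ≤ d k * exp (-((y (k + 1) - y k) / M))) :
    d e ≤ d a * exp (-((y e - y a) / M)) := by
  induction e, hae using Nat.le_induction with
  | base => simp
  | succ e hae ih =>
    calc d (e + 1) ≤ d e * exp (-((y (e + 1) - y e) / M)) := h e hae (by omega)
      _ ≤ d a * exp (-((y e - y a) / M)) * exp (-((y (e + 1) - y e) / M)) :=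
        mul_le_mul_of_nonneg_right (ih fun k hk hke => h k hk (by omega)) (exp_pos _).le
      _ = d a * exp (-((y (e + 1) - y a) / M)) := by
        rw [mul_assoc, ← exp_add]; ring_nf

lemma four_sevenths_lt_exp_neg_half : 4 / 7 < exp (-(1 / 2)) := by
  have hsq : exp (1 / 2) * exp (1 / 2) = exp 1 := by rw [← exp_add]; norm_num
  have h : exp (1 / 2) < 7 / 4 := by nlinarith [exp_one_lt_d9, exp_pos (1 / 2)]
  rw [exp_neg, lt_inv_comm₀ (by norm_num) (exp_pos _)]
  linarith

lemma one_sub_exp_neg_half_mul_two_sub_le {z q : ℝ} (hz : z ≤ 1 / 2) (hq : q < 1)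
    (hzq : 1 - q < z) :
    (1 - exp (-(1 / 2))) * (2 - exp (-((q - z) / (1 - q)))) ≤
      1 - exp (-z) * exp (-((q - z) / (1 - q))) := by
  set K := exp (-(1 / 2))
  set E := exp (-((q - z) / (1 - q)))
  set e := exp (-z)
  -- After `E * (1 - z) ≤ z` and `e * (1/2 + z) ≤ K` (both from `1 + x ≤ exp x`), what is left
  -- is a quadratic inequality in `z` vanishing at `z = 1/2`; it holds because `4/7 < K`.
  have hK : 4 / 7 < K := four_sevenths_lt_exp_neg_half
  have hq' : 0 < 1 - q := by linarith
  have hE : E * (1 - z) ≤ z := by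
    have h := add_one_le_exp ((q - z) / (1 - q))
    have h1 : (q - z) / (1 - q) + 1 = (1 - z) / (1 - q) := by field_simp; ring
    rw [h1, div_le_iff₀ hq'] at h
    have h2 : E * exp ((q - z) / (1 - q)) = 1 := by rw [← exp_add]; simp
    nlinarith [exp_pos (-((q - z) / (1 - q)))]
  have he : (e - (1 - K)) * (1 / 2 + z) ≤ K - (1 - K) * (1 / 2 + z) := by
    have h1 : e = K * exp (1 / 2 - z) := by simp only [e, K, ← exp_add]; ring_nf
    have h2 : exp (1 / 2 - z) * exp (z - 1 / 2) = 1 := by rw [← exp_add]; simp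
    have h3 : (1 / 2 + z) * exp (1 / 2 - z) ≤ 1 := by
      nlinarith [add_one_le_exp (z - 1 / 2), exp_pos (1 / 2 - z)]
    rw [h1]
    nlinarith [exp_pos (-(1 / 2) : ℝ)]
  have he' : 1 - z ≤ e := by linarith [add_one_le_exp (-z)]
  have hprod := mul_le_mul hE he (by nlinarith) (by linarith)
  have hquad : z * (K - (1 - K) * (1 / 2 + z)) ≤ (2 * K - 1) * ((1 - z) * (1 / 2 + z)) := by
    nlinarith [mul_nonneg (by linarith : (0:ℝ) ≤ 1 / 2 - z)
      (by nlinarith : (0:ℝ) ≤ (2 * K - 1) - (2 - 3 * K) * z)]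
  have hpos : 0 < (1 - z) * (1 / 2 + z) := mul_pos (by linarith) (by linarith)
  have : E * (e - (1 - K)) ≤ 2 * K - 1 := le_of_mul_le_mul_right (by linarith) hpos
  linarith

lemma one_sub_exp_neg_half_mul_le_of_two_phases {F L g a a' s s' cw b : ℝ} (hF : 0 ≤ F)
    (hg : g ≤ L) (ha : a ≤ L) (ha' : a' ≤ L) (hb : 0 < b) (hs : s < b / 2) (hcw : cw < b)
    (hscw : b < s + cw) (hs' : cw ≤ s')
    (hphase1 : F - a ≤ F * exp (-(s / b)))
    (hphase2 : F - g - a' ≤ (F - g - a) * exp (-((s' - s) / (b - cw)))) :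
    (1 - exp (-(1 / 2))) * F ≤ L := by
  have hratio : (cw / b - s / b) / (1 - cw / b) = (cw - s) / (b - cw) := by
    field_simp
  have hkey := one_sub_exp_neg_half_mul_two_sub_le (z := s / b) (q := cw / b)
    (by rw [div_le_iff₀ hb]; linarith) (by rwa [div_lt_one hb])
    (by rw [one_sub_div hb.ne', div_lt_div_iff_of_pos_right hb]; linarith)
  rw [hratio] at hkey
  set E := exp (-((cw - s) / (b - cw)))
  have hE1 : E ≤ 1 := exp_le_one_iff.2 (neg_nonpos.2 (div_nonneg (by linarith) (by linarith)))
  have hE0 : 0 < E := exp_pos _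
  have hphase2' : F - g - L ≤ (F - g - a) * E := by
    rcases le_or_gt (F - g - a) 0 with hneg | hpos
    · nlinarith
    · have hEE : exp (-((s' - s) / (b - cw))) ≤ E :=
        exp_le_exp.2 (neg_le_neg (div_le_div_of_nonneg_right (by linarith) (by linarith)))
      nlinarith [mul_le_mul_of_nonneg_left hEE hpos.le]
  have hF' : F * (1 - exp (-(s / b)) * E) ≤ L * (2 - E) := by nlinarith
  nlinarith [mul_le_mul_of_nonneg_left hkey hF]

section GreedyRun

variable {V : Type*} [DecidableEq V]

/-- `u k` is the `k`-th element considered and `A k` the set accepted before it; only the first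
`n` steps are constrained. -/
structure IsGreedyRun (f : Finset V → ℝ) (c : V → ℝ) (b : ℝ) (n : ℕ) (u : ℕ → V)
    (A : ℕ → Finset V) : Prop where
  injOn : Set.InjOn u (Set.Iio n)
  zero : A 0 = ∅
  accept : ∀ k < n, ∑ v ∈ A k, c v + c (u k) ≤ b → A (k + 1) = insert (u k) (A k)
  reject : ∀ k < n, b < ∑ v ∈ A k, c v + c (u k) → A (k + 1) = A k
  greedy : ∀ i j, i ≤ j → j < n →
    marginal f (u j) (A i) * c (u i) ≤ marginal f (u i) (A i) * c (u j)

namespace IsGreedyRun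

variable {f : Finset V → ℝ} {c : V → ℝ} {b : ℝ} {n : ℕ} {u : ℕ → V}
  {A : ℕ → Finset V} {k l : ℕ}

lemma subset_succ (h : IsGreedyRun f c b n u A) (hk : k < n) : A k ⊆ A (k + 1) := by
  by_cases hfit : ∑ v ∈ A k, c v + c (u k) ≤ b
  · rw [h.accept k hk hfit]
    exact subset_insert _ _
  · rw [h.reject k hk (not_le.1 hfit)]

lemma subset_of_le (h : IsGreedyRun f c b n u A) (hkl : k ≤ l) (hl : l ≤ n) : A k ⊆ A l := by
  induction l, hkl using Nat.le_induction with
  | base => exact subset_rfl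
  | succ l _ ih => exact (ih (by omega)).trans (h.subset_succ (by omega))

lemma mem_of_fits (h : IsGreedyRun f c b n u A) (hk : k < n)
    (hfit : ∑ v ∈ A k, c v + c (u k) ≤ b) (hkl : k < l) (hl : l ≤ n) : u k ∈ A l :=
  h.subset_of_le hkl hl (by rw [h.accept k hk hfit]; exact mem_insert_self _ _)

lemma exists_fits_of_mem (h : IsGreedyRun f c b n u A) (hk : k ≤ n) {v : V} (hv : v ∈ A k) :
    ∃ j < k, u j = v ∧ ∑ w ∈ A j, c w + c (u j) ≤ b := by
  induction k with
  | zero => simp [h.zero] at hv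
  | succ k ih =>
    by_cases hfit : ∑ w ∈ A k, c w + c (u k) ≤ b
    · rw [h.accept k (by omega) hfit, mem_insert] at hv
      rcases hv with rfl | hv
      · exact ⟨k, by omega, rfl, hfit⟩
      · obtain ⟨j, hjk, hj⟩ := ih (by omega) hv
        exact ⟨j, by omega, hj⟩
    · rw [h.reject k (by omega) (not_le.1 hfit)] at hv
      obtain ⟨j, hjk, hj⟩ := ih (by omega) hv
      exact ⟨j, by omega, hj⟩

lemma apply_notMem (h : IsGreedyRun f c b n u A) (hk : k < n) : u k ∉ A k := by
  intro hmem
  obtain ⟨j, hjk, hj, -⟩ := h.exists_fits_of_mem hk.le hmem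
  have : j = k := h.injOn (show j < n by omega) hk hj
  omega

lemma apply_notMem_of_reject (h : IsGreedyRun f c b n u A) (hk : k < n)
    (hrej : b < ∑ v ∈ A k, c v + c (u k)) (hl : l ≤ n) : u k ∉ A l := by
  intro hmem
  obtain ⟨j, hjl, hj, hfit⟩ := h.exists_fits_of_mem hl hmem
  obtain rfl : j = k := h.injOn (show j < n by omega) hk hj
  exact hrej.not_ge hfit

lemma cost_succ (h : IsGreedyRun f c b n u A) (hk : k < n)
    (hfit : ∑ v ∈ A k, c v + c (u k) ≤ b) :
    ∑ v ∈ A (k + 1), c v = ∑ v ∈ A k, c v + c (u k) := by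
  rw [h.accept k hk hfit, sum_insert (h.apply_notMem hk), add_comm]

lemma subset_or_exists_first_reject (h : IsGreedyRun f c b n u A) {W : Finset V}
    (hW : ∀ v ∈ W, ∃ k < n, u k = v) :
    W ⊆ A n ∨ ∃ t < n, u t ∈ W ∧ b < ∑ v ∈ A t, c v + c (u t) ∧
      ∀ l < t, u l ∈ W → ∑ v ∈ A l, c v + c (u l) ≤ b := by
  classical
  by_cases hex : ∃ t, t < n ∧ u t ∈ W ∧ b < ∑ v ∈ A t, c v + c (u t)
  · obtain ⟨htn, htW, hrej⟩ := Nat.find_spec hex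
    refine Or.inr ⟨Nat.find hex, htn, htW, hrej, fun l hl hlW => ?_⟩
    by_contra hfit
    exact Nat.find_min hex hl ⟨by omega, hlW, not_le.1 hfit⟩
  · push Not at hex
    refine Or.inl fun v hv => ?_
    obtain ⟨k, hk, rfl⟩ := hW v hv
    exact h.mem_of_fits hk (hex k hk hv) hk le_rfl

lemma exists_ge_of_mem_sdiff (h : IsGreedyRun f c b n u A) {W : Finset V}
    (hW : ∀ v ∈ W, ∃ k < n, u k = v)
    (hfirst : ∀ l < k, u l ∈ W → ∑ v ∈ A l, c v + c (u l) ≤ b) (hk : k ≤ n) :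
    ∀ v ∈ W \ A k, ∃ l, k ≤ l ∧ l < n ∧ u l = v := by
  intro v hv
  rw [mem_sdiff] at hv
  obtain ⟨l, hl, rfl⟩ := hW v hv.1
  refine ⟨l, ?_, hl, rfl⟩
  by_contra hlk
  exact hv.2 (h.mem_of_fits hl (hfirst l (by omega) hv.1) (by omega) hk)

lemma mul_sub_le_mul_marginal (h : IsGreedyRun f c b n u A)
    (hmono : ∀ S T : Finset V, S ⊆ T → f S ≤ f T)
    (hsub : ∀ S T : Finset V, f (S ∪ T) + f (S ∩ T) ≤ f S + f T) (hc : ∀ v, 0 ≤ c v)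
    {W : Finset V} {T M : ℝ} (hpending : ∀ v ∈ W \ A k, ∃ l, k ≤ l ∧ l < n ∧ u l = v)
    (hT : T ≤ f (A k ∪ W)) (hWM : ∑ v ∈ W, c v ≤ M) :
    c (u k) * (T - f (A k)) ≤ M * marginal f (u k) (A k) := by
  calc c (u k) * (T - f (A k))
      ≤ c (u k) * ∑ v ∈ W \ A k, marginal f v (A k) :=
        mul_le_mul_of_nonneg_left (by linarith [sub_le_sum_marginal hsub (A k) W]) (hc _)
    _ = ∑ v ∈ W \ A k, marginal f v (A k) * c (u k) := by rw [mul_comm, sum_mul]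
    _ ≤ ∑ v ∈ W \ A k, marginal f (u k) (A k) * c v := sum_le_sum fun v hv => by
        obtain ⟨l, hkl, hl, rfl⟩ := hpending v hv
        exact h.greedy k l hkl hl
    _ = marginal f (u k) (A k) * ∑ v ∈ W \ A k, c v := by rw [mul_sum]
    _ ≤ marginal f (u k) (A k) * M := by
        gcongr
        · exact marginal_nonneg hmono _ _
        · exact (sum_le_sum_of_subset_of_nonneg sdiff_subset fun v _ _ => hc v).trans hWM
    _ = M * marginal f (u k) (A k) := mul_comm _ _

lemma sub_le_mul_exp (h : IsGreedyRun f c b n u A)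
    (hmono : ∀ S T : Finset V, S ⊆ T → f S ≤ f T)
    (hsub : ∀ S T : Finset V, f (S ∪ T) + f (S ∩ T) ≤ f S + f T) (hc : ∀ v, 0 ≤ c v)
    {W : Finset V} {T M : ℝ} {a e : ℕ} (hM : 0 < M) (hae : a ≤ e) (hen : e ≤ n)
    (hW : ∀ v ∈ W, ∃ k < n, u k = v)
    (hfirst : ∀ l < e, u l ∈ W → ∑ v ∈ A l, c v + c (u l) ≤ b)
    (hWM : ∑ v ∈ W, c v ≤ M) (hT : ∀ k, a ≤ k → k < e → T ≤ f (A k ∪ W)) :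
    T - f (A e) ≤ (T - f (A a)) * exp (-((∑ v ∈ A e, c v - ∑ v ∈ A a, c v) / M)) := by
  refine le_mul_exp_of_forall_le_mul_exp (d := fun k => T - f (A k))
    (y := fun k => ∑ v ∈ A k, c v) hae fun k hak hke => ?_
  have hk : k < n := by omega
  by_cases hfit : ∑ v ∈ A k, c v + c (u k) ≤ b
  · have hpending := h.exists_ge_of_mem_sdiff hW (fun l hl => hfirst l (by omega)) hk.le
    have hstep := h.mul_sub_le_mul_marginal hmono hsub hc hpending (hT k hak hke) hWM
    rw [marginal, ← h.accept k hk hfit] at hstep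
    simp only [h.cost_succ hk hfit, add_sub_cancel_left]
    exact le_mul_exp_neg_of_mul_le hM (hc _)
      (by linarith [hmono _ _ (h.subset_succ hk)]) (by linarith)
  · simp [h.reject k hk (not_le.1 hfit)]

lemma sub_le_mul_exp_erase_of_reject (h : IsGreedyRun f c b n u A)
    (hmono : ∀ S T : Finset V, S ⊆ T → f S ≤ f T)
    (hsub : ∀ S T : Finset V, f (S ∪ T) + f (S ∩ T) ≤ f S + f T) (hc : ∀ v, 0 ≤ c v)
    {W : Finset V} {M : ℝ} {t e : ℕ} (hM : 0 < M) (ht : t < n)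
    (hrej : b < ∑ v ∈ A t, c v + c (u t)) (hte : t ≤ e) (hen : e ≤ n) (hw : u t ∈ W)
    (hW : ∀ v ∈ W.erase (u t), ∃ k < n, u k = v)
    (hfirst : ∀ l < e, u l ∈ W.erase (u t) → ∑ v ∈ A l, c v + c (u l) ≤ b)
    (hWM : ∑ v ∈ W.erase (u t), c v ≤ M) :
    f W - marginal f (u t) (A t) - f (A e) ≤
      (f W - marginal f (u t) (A t) - f (A t)) *
        exp (-((∑ v ∈ A e, c v - ∑ v ∈ A t, c v) / M)) :=
  h.sub_le_mul_exp hmono hsub hc hM hte hen hW hfirst hWM fun k htk hke => by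
    linarith [hmono _ _ (subset_union_right : W ⊆ A k ∪ W), le_add_marginal_of_mem hsub hw
      (h.subset_of_le htk (by omega)) (h.apply_notMem_of_reject ht hrej (by omega))]

theorem one_sub_exp_neg_half_mul_le (h : IsGreedyRun f c b n u A) (hf0 : f ∅ = 0)
    (hmono : ∀ S T : Finset V, S ⊆ T → f S ≤ f T)
    (hsub : ∀ S T : Finset V, f (S ∪ T) + f (S ∩ T) ≤ f S + f T) (hc : ∀ v, 0 < c v)
    (hb : 0 < b) {OPT : Finset V} (hOPT : ∑ v ∈ OPT, c v ≤ b)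
    (hOPTu : ∀ v ∈ OPT, ∃ k < n, u k = v) {L : ℝ} (hLA : f (A n) ≤ L)
    (hLs : ∀ v ∈ OPT, f {v} ≤ L) :
    (1 - exp (-(1 / 2))) * f OPT ≤ L := by
  have hK := four_sevenths_lt_exp_neg_half
  have hF : 0 ≤ f OPT := hf0 ▸ hmono _ _ (empty_subset _)
  have hA : ∀ k ≤ n, f (A k) ≤ L := fun k hk =>
    (hmono _ _ (h.subset_of_le hk le_rfl)).trans hLA
  have hc0 : ∀ v, 0 ≤ c v := fun v => (hc v).le
  have of_le_two_mul : f OPT ≤ 2 * L → (1 - exp (-(1 / 2))) * f OPT ≤ L := fun h2 => by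
    nlinarith
  rcases h.subset_or_exists_first_reject hOPTu with hsubA | ⟨t, ht, hwOPT, hrej, hfirst⟩
  · exact of_le_two_mul (by linarith [hmono _ _ hsubA, hA n le_rfl])
  have hphase1 := h.sub_le_mul_exp hmono hsub hc0 hb (Nat.zero_le t) ht.le hOPTu hfirst hOPT
    fun k _ _ => hmono _ _ subset_union_right
  simp only [h.zero, hf0, sum_empty, sub_zero] at hphase1
  by_cases hhalf : b / 2 ≤ ∑ v ∈ A t, c v
  · have : exp (-((∑ v ∈ A t, c v) / b)) ≤ exp (-(1 / 2)) :=
      exp_le_exp.2 (by rw [neg_le_neg_iff, le_div_iff₀ hb]; linarith)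
    nlinarith [hA t ht.le]
  -- Otherwise the rejected element `w` of `OPT` costs more than `b / 2`, and the rest of `OPT`
  -- is run against the residual budget `b - c w`.
  set w := u t
  have hg := (marginal_le_apply_singleton hf0 hsub (h.apply_notMem_of_reject ht hrej ht.le)).trans
    (hLs w hwOPT)
  have hOPTu' : ∀ v ∈ OPT.erase w, ∃ k < n, u k = v := fun v hv =>
    hOPTu v (mem_of_mem_erase hv)
  rcases h.subset_or_exists_first_reject hOPTu' with hsubA | ⟨t2, ht2, ht2W, hrej2, hfirst2⟩
  · have hsplit := apply_le_apply_singleton_add_apply_erase hf0 hsub hwOPT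
    exact of_le_two_mul (by linarith [hmono _ _ hsubA, hA n le_rfl, hLs w hwOPT])
  have htt2 : t ≤ t2 := by
    by_contra hlt
    exact hrej2.not_ge (hfirst t2 (by omega) (mem_of_mem_erase ht2W))
  have hcw : ∑ v ∈ OPT.erase w, c v = ∑ v ∈ OPT, c v - c w := sum_erase_eq_sub hwOPT
  have hct2 : c (u t2) ≤ b - c w := (single_le_sum (fun v _ => hc0 v) ht2W).trans (by linarith)
  have hM : 0 < b - c w := (hc _).trans_le hct2
  have hphase2 := h.sub_le_mul_exp_erase_of_reject hmono hsub hc0 hM ht hrej htt2 ht2.le hwOPT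
    hOPTu' hfirst2 (by linarith)
  exact one_sub_exp_neg_half_mul_le_of_two_phases hF hg (hA t ht.le) (hA t2 ht2.le) hb
    (not_le.1 hhalf) (by linarith) hrej (by linarith) hphase1 hphase2

end IsGreedyRun

end GreedyRun

lemma IsGreedyRun.of_fin {V : Type*} [DecidableEq V] [Nonempty V] {f : Finset V → ℝ}
    {c : V → ℝ} {b : ℝ} {n : ℕ} {u : Fin n → V} (hu : Function.Injective u)
    {A : Fin (n + 1) → Finset V} (hA0 : A 0 = ∅)
    (hstep : ∀ i : Fin n,
      ((∑ v ∈ A i.castSucc, c v) + c (u i) ≤ b → A i.succ = insert (u i) (A i.castSucc)) ∧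
      (¬ ((∑ v ∈ A i.castSucc, c v) + c (u i) ≤ b) → A i.succ = A i.castSucc))
    (hgreedy : ∀ i j : Fin n, i ≤ j →
      (f (insert (u i) (A i.castSucc)) - f (A i.castSucc)) * c (u j) ≥
      (f (insert (u j) (A i.castSucc)) - f (A i.castSucc)) * c (u i)) :
    IsGreedyRun f c b n (fun k => if hk : k < n then u ⟨k, hk⟩ else Classical.arbitrary V)
      (fun k => A (Fin.clamp k n)) := by
  have hcast : ∀ k (hk : k < n), Fin.clamp k n = (⟨k, hk⟩ : Fin n).castSucc :=
    fun k hk => Fin.ext (by simp; omega)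
  have hsucc : ∀ k (hk : k < n), Fin.clamp (k + 1) n = (⟨k, hk⟩ : Fin n).succ :=
    fun k hk => Fin.ext (by simp; omega)
  refine ⟨fun i hi j hj hij => ?_, ?_, fun k hk hfit => ?_, fun k hk hrej => ?_,
    fun i j hij hj => ?_⟩
  · simp only [Set.mem_Iio] at hi hj
    simpa [hi, hj] using congrArg Fin.val (hu (by simpa [hi, hj] using hij))
  · rw [show Fin.clamp 0 n = 0 from Fin.ext (by simp)]
    exact hA0
  · simp only [hk, dite_true, hcast k hk, hsucc k hk] at hfit ⊢
    exact (hstep ⟨k, hk⟩).1 hfit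
  · simp only [hk, dite_true, hcast k hk, hsucc k hk] at hrej ⊢
    exact (hstep ⟨k, hk⟩).2 (not_le.2 hrej)
  · have hi : i < n := by omega
    simp only [hi, hj, dite_true, hcast i hi, marginal]
    exact hgreedy ⟨i, hi⟩ ⟨j, hj⟩ hij

theorem stmt16_general {V : Type*} [Fintype V] [DecidableEq V] [Nonempty V]
    (f : Finset V → ℝ) (c : V → ℝ) (b : ℝ)
    (hf0 : f ∅ = 0)
    (hmono : ∀ S T : Finset V, S ⊆ T → f S ≤ f T)
    (hsub : ∀ S T : Finset V, f (S ∪ T) + f (S ∩ T) ≤ f S + f T)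
    (hcpos : ∀ v : V, 0 < c v)
    (hb : 0 < b)
    (u : Fin (Fintype.card V) → V) (hu : Function.Bijective u)
    (A : Fin (Fintype.card V + 1) → Finset V)
    (hA0 : A 0 = ∅)
    (hstep : ∀ i : Fin (Fintype.card V),
      ((∑ v ∈ A i.castSucc, c v) + c (u i) ≤ b →
        A i.succ = insert (u i) (A i.castSucc)) ∧
      (¬ ((∑ v ∈ A i.castSucc, c v) + c (u i) ≤ b) →
        A i.succ = A i.castSucc))
    (hgreedy : ∀ i j : Fin (Fintype.card V), i ≤ j →
      (f (insert (u i) (A i.castSucc)) - f (A i.castSucc)) * c (u j) ≥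
      (f (insert (u j) (A i.castSucc)) - f (A i.castSucc)) * c (u i))
    (OPT : Finset V) (hOPT : ∑ v ∈ OPT, c v ≤ b) :
    max (f (A (Fin.last (Fintype.card V))))
      (Finset.univ.sup' Finset.univ_nonempty fun v : V => f {v}) ≥
    sInf {α : ℝ | α ∈ Set.Icc (0 : ℝ) 1 ∧
      ∃ x1 x2 x3 : ℝ,
        x1 ∈ Set.Icc (0 : ℝ) 1 ∧ x2 ∈ Set.Icc (0 : ℝ) 1 ∧ x3 ∈ Set.Icc (0 : ℝ) 1 ∧
        α ≥ x1 ∧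
        α ≥ 1 - x1 - x2 ∧
        (1 - x3) * α ≥ (1 - x3) * x1 + (1 - 2 * x3) * x2 ∧
        x1 ≥ 1 - Real.exp (-x3)} * f OPT := by
  have hrun := IsGreedyRun.of_fin (f := f) (c := c) (b := b) hu.injective hA0 hstep hgreedy
  have hbound := hrun.one_sub_exp_neg_half_mul_le hf0 hmono hsub hcpos hb hOPT
    (fun v _ => by
      obtain ⟨⟨k, hk⟩, rfl⟩ := hu.surjective v
      exact ⟨k, hk, by simp [hk]⟩)
    (L := max (f (A (Fin.last (Fintype.card V))))
      (Finset.univ.sup' Finset.univ_nonempty fun v : V => f {v}))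
    (le_of_eq_of_le (by rw [Fin.clamp_eq_last _ _ le_rfl]) (le_max_left _ _))
    fun v _ => (le_sup' (fun v : V => f {v}) (mem_univ v)).trans (le_max_right _ _)
  have hK : 0 < exp (-(1 / 2)) := exp_pos _
  have hK1 : exp (-(1 / 2)) < 1 := exp_lt_one_iff.2 (by norm_num)
  refine le_trans (mul_le_mul_of_nonneg_right (csInf_le ⟨0, fun _ hα => hα.1.1⟩ ?_)
    (hf0 ▸ hmono _ _ (empty_subset OPT))) hbound
  refine ⟨⟨by linarith, by linarith⟩, 1 - exp (-(1 / 2)), 1, 1 / 2,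
    ⟨by linarith, by linarith⟩, ⟨zero_le_one, le_rfl⟩, ⟨by norm_num, by norm_num⟩,
    le_rfl, by linarith, by linarith, ?_⟩
  norm_num

/-- Lemma 5.4: f(S_m) ≥ ᾱ* · f(OPT), where ᾱ* is the infimum of the simplified
optimization problem. -/
theorem stmt16 {V : Type*} [Fintype V] [DecidableEq V] [Nonempty V]
    (f : Finset V → ℝ) (c : V → ℝ) (b : ℝ)
    (hf0 : f ∅ = 0)
    (hmono : ∀ S T : Finset V, S ⊆ T → f S ≤ f T)
    (hsub : ∀ S T : Finset V, f (S ∪ T) + f (S ∩ T) ≤ f S + f T)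
    (hcpos : ∀ v : V, 0 < c v)
    (hb : 0 < b)
    (hcb : ∀ v : V, c v ≤ b)
    (u : Fin (Fintype.card V) → V) (hu : Function.Bijective u)
    (A : Fin (Fintype.card V + 1) → Finset V)
    (hA0 : A 0 = ∅)
    (hstep : ∀ i : Fin (Fintype.card V),
      ((∑ v ∈ A i.castSucc, c v) + c (u i) ≤ b →
        A i.succ = insert (u i) (A i.castSucc)) ∧
      (¬ ((∑ v ∈ A i.castSucc, c v) + c (u i) ≤ b) →
        A i.succ = A i.castSucc))
    (hgreedy : ∀ i j : Fin (Fintype.card V), i ≤ j →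
      (f (insert (u i) (A i.castSucc)) - f (A i.castSucc)) * c (u j) ≥
      (f (insert (u j) (A i.castSucc)) - f (A i.castSucc)) * c (u i))
    (OPT : Finset V) (hOPT : ∑ v ∈ OPT, c v ≤ b) :
    max (f (A (Fin.last (Fintype.card V))))
      (Finset.univ.sup' Finset.univ_nonempty fun v : V => f {v}) ≥
    sInf {α : ℝ | α ∈ Set.Icc (0 : ℝ) 1 ∧
      ∃ x1 x2 x3 : ℝ,
        x1 ∈ Set.Icc (0 : ℝ) 1 ∧ x2 ∈ Set.Icc (0 : ℝ) 1 ∧ x3 ∈ Set.Icc (0 : ℝ) 1 ∧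
        α ≥ x1 ∧
        α ≥ 1 - x1 - x2 ∧
        (1 - x3) * α ≥ (1 - x3) * x1 + (1 - 2 * x3) * x2 ∧
        x1 ≥ 1 - Real.exp (-x3)} * f OPT :=
  stmt16_general f c b hf0 hmono hsub hcpos hb u hu A hA0 hstep hgreedy OPT hOPT
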